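/- arXiv:2003.02285 — 2 statements merged into one kernel-verified Lean document; each statement's English description precedes it below -/
import Mathlib

section
/- Let S₁ = X⊗Z⊗Z⊗X⊗1, S₂ = 1⊗X⊗Z⊗Z⊗X, S₃ = X⊗1⊗X⊗Z⊗Z, S₄ = Z⊗X⊗1⊗X⊗Z be the five-qubit code stabilizers, regarded via Kronecker products as endomorphisms of the 32-dimensional complex vector space ℂ²⊗ℂ²⊗ℂ²⊗ℂ²⊗ℂ². Then the common fixed subspace C₅ = ⨅_{i ∈ Fin 4} ker(Sᵢ − id) has complex dimension exactly 2. -/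
/-!
The stabilizers `Sᵢ` are involutions, and any two of them commute because they anticommute in
exactly two tensor factors. Hence `(1 + Sᵢ)/2` is a projection onto `ker (Sᵢ - 1)`, and the
product `P` of these four commuting projections is a projection onto the code space `C₅`, so
`dim C₅ = tr P = 2⁻⁴ ∑_{T ⊆ {1,…,4}} tr ∏_{i ∈ T} Sᵢ`. For `T ≠ ∅` the product is, up to sign,
a tensor product of Pauli matrices with a traceless factor, so only `T = ∅` contributes, and
`dim C₅ = 32 / 16 = 2`.
-/

open Matrix
open scoped Kronecker

namespace FiveQubitCode

/-- The Pauli matrix X. -/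
def X : Matrix (Fin 2) (Fin 2) ℂ := !![0, 1; 1, 0]

/-- The Pauli matrix Z. -/
def Z : Matrix (Fin 2) (Fin 2) ℂ := !![1, 0; 0, -1]

/-- The index type of the 32-dimensional five-qubit space `ℂ²⊗ℂ²⊗ℂ²⊗ℂ²⊗ℂ²`. -/
abbrev Q : Type := Fin 2 × Fin 2 × Fin 2 × Fin 2 × Fin 2

/-- The Kronecker (tensor) product of a string of five 2×2 matrices. -/
def emb (g : Fin 5 → Matrix (Fin 2) (Fin 2) ℂ) : Matrix Q Q ℂ :=
  g 0 ⊗ₖ (g 1 ⊗ₖ (g 2 ⊗ₖ (g 3 ⊗ₖ g 4)))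

/-- The four stabilizers `S₁ = X⊗Z⊗Z⊗X⊗1`, `S₂ = 1⊗X⊗Z⊗Z⊗X`, `S₃ = X⊗1⊗X⊗Z⊗Z`,
`S₄ = Z⊗X⊗1⊗X⊗Z` of the five-qubit code. -/
def S : Fin 4 → Matrix Q Q ℂ :=
  ![emb ![X, Z, Z, X, 1], emb ![1, X, Z, Z, X], emb ![X, 1, X, Z, Z], emb ![Z, X, 1, X, Z]]

end FiveQubitCode

namespace Matrix

variable {α l m n p : Type*} [Ring α]

theorem neg_kronecker (A : Matrix l m α) (B : Matrix n p α) : (-A) ⊗ₖ B = -(A ⊗ₖ B) := by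
  ext; simp [neg_mul]

theorem kronecker_neg (A : Matrix l m α) (B : Matrix n p α) : A ⊗ₖ (-B) = -(A ⊗ₖ B) := by
  ext; simp [mul_neg]

end Matrix

section StabilizerProjection

open LinearMap

theorem IsIdempotentElem.list_prod {R : Type*} [Monoid R] {l : List R} (hl : l.Pairwise Commute)
    (h : ∀ p ∈ l, IsIdempotentElem p) : IsIdempotentElem l.prod := by
  induction l with
  | nil => exact IsIdempotentElem.one
  | cons p t ih =>
    rw [List.pairwise_cons] at hl
    exact .mul_of_commute (Commute.list_prod_right t p hl.1) (h p List.mem_cons_self)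
      (ih hl.2 fun q hq => h q (List.mem_cons_of_mem p hq))

variable {R M : Type*}

section Semiring

variable [Semiring R] [AddCommMonoid M] [Module R M]

theorem IsIdempotentElem.range_mul_of_commute {p q : Module.End R M} (hpq : Commute p q)
    (hp : IsIdempotentElem p) (hq : IsIdempotentElem q) :
    range (p * q) = range p ⊓ range q := by
  refine le_antisymm (le_inf (range_comp_le_range q p) (hpq.eq ▸ range_comp_le_range p q)) ?_
  rintro x ⟨hxp, hxq⟩
  rw [SetLike.mem_coe, IsIdempotentElem.mem_range_iff hp] at hxp
  rw [SetLike.mem_coe, IsIdempotentElem.mem_range_iff hq] at hxq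
  exact ⟨x, by rw [Module.End.mul_apply, hxq, hxp]⟩

theorem IsIdempotentElem.range_list_prod {l : List (Module.End R M)} (hl : l.Pairwise Commute)
    (h : ∀ p ∈ l, IsIdempotentElem p) : range l.prod = ⨅ p ∈ l, range p := by
  induction l with
  | nil => simp [Module.End.one_eq_id]
  | cons p t ih =>
    rw [List.pairwise_cons] at hl
    have ht : ∀ q ∈ t, IsIdempotentElem q := fun q hq => h q (List.mem_cons_of_mem p hq)
    rw [List.prod_cons, IsIdempotentElem.range_mul_of_commute (Commute.list_prod_right t p hl.1)
      (h p List.mem_cons_self) (.list_prod hl.2 ht), ih hl.2 ht]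
    simp [iInf_or, iInf_inf_eq]

end Semiring

variable [CommRing R] [Invertible (2 : R)] [AddCommGroup M] [Module R M]

section Involution

variable {s : Module.End R M}

theorem isIdempotentElem_invOf_two_smul_one_add (hs : s * s = 1) :
    IsIdempotentElem ((⅟2 : R) • (1 + s)) := by
  have hsq : (1 + s) * (1 + s) = (2 : R) • (1 + s) := by
    simp only [mul_add, add_mul, hs, one_mul, mul_one, two_smul]; abel
  rw [IsIdempotentElem, smul_mul_smul_comm, hsq, smul_smul, mul_assoc, invOf_mul_self, mul_one]

theorem range_invOf_two_smul_one_add (hs : s * s = 1) :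
    range ((⅟2 : R) • (1 + s)) = ker (s - 1) := by
  ext x
  rw [IsIdempotentElem.mem_range_iff (isIdempotentElem_invOf_two_smul_one_add hs), mem_ker,
    LinearMap.sub_apply, sub_eq_zero, LinearMap.smul_apply, LinearMap.add_apply,
    Module.End.one_apply]
  constructor
  · intro hx
    have hsx := congrArg s hx
    rw [map_smul, map_add, ← Module.End.mul_apply, hs, Module.End.one_apply, add_comm, hx] at hsx
    exact hsx.symm
  · intro hx
    rw [hx, ← two_smul R x, smul_smul, invOf_mul_self, one_smul]

end Involution

def stabilizerProj {n : ℕ} (s : Fin n → Module.End R M) : Module.End R M :=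
  (List.ofFn fun i => (⅟2 : R) • (1 + s i)).prod

theorem isProj_stabilizerProj {n : ℕ} {s : Fin n → Module.End R M} (hs : ∀ i, s i * s i = 1)
    (hc : ∀ i j, Commute (s i) (s j)) :
    IsProj (⨅ i, ker (s i - 1)) (stabilizerProj s) := by
  have hl : (List.ofFn fun i => (⅟2 : R) • (1 + s i)).Pairwise Commute :=
    List.pairwise_ofFn.mpr fun i j _ =>
      ((Commute.one_left _).add_left ((Commute.one_right _).add_right (hc i j))
        |>.smul_left _ |>.smul_right _)
  have hp : ∀ p ∈ List.ofFn fun i => (⅟2 : R) • (1 + s i), IsIdempotentElem p := by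
    simp only [List.mem_ofFn, forall_exists_index, forall_apply_eq_imp_iff]
    exact fun i => isIdempotentElem_invOf_two_smul_one_add (hs i)
  have hrange : range (stabilizerProj s) = ⨅ i, ker (s i - 1) := by
    rw [stabilizerProj, IsIdempotentElem.range_list_prod hl hp]
    simp only [List.mem_ofFn, iInf_exists]
    rw [iInf_comm]
    simp only [iInf_iInf_eq_right]
    exact iInf_congr fun i => range_invOf_two_smul_one_add (hs i)
  exact hrange ▸ IsIdempotentElem.isProj_range _ (.list_prod hl hp)

end StabilizerProjection

namespace FiveQubitCode

lemma X_mul_X : X * X = 1 := by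
  ext i j; fin_cases i <;> fin_cases j <;> simp [X]

lemma Z_mul_Z : Z * Z = 1 := by
  ext i j; fin_cases i <;> fin_cases j <;> simp [Z]

lemma Z_mul_X : Z * X = -(X * Z) := by
  ext i j; fin_cases i <;> fin_cases j <;> simp [X, Z]

lemma S_mul_self (i : Fin 4) : S i * S i = 1 := by
  fin_cases i <;> simp [S, emb, ← mul_kronecker_mul, X_mul_X, Z_mul_Z]

lemma commute_S (i j : Fin 4) : Commute (S i) (S j) := by
  fin_cases i <;> fin_cases j <;>
    simp [Commute, SemiconjBy, S, emb, ← mul_kronecker_mul, Z_mul_X, neg_kronecker, kronecker_neg]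

lemma trace_prod_one_add_S :
    ((1 + S 0) * ((1 + S 1) * ((1 + S 2) * (1 + S 3)))).trace = 32 := by
  simp only [add_mul, mul_add, one_mul, mul_one, trace_add, ← mul_assoc]
  simp [S, emb, ← mul_kronecker_mul, trace_kronecker, X, Z, Matrix.trace_fin_two]

lemma trace_stabilizerProj_S :
    LinearMap.trace ℂ (Q → ℂ) (stabilizerProj fun i => toLin' (S i)) = 2 := by
  have h : (stabilizerProj fun i => toLin' (S i)) =
      toLin' ((⅟2 : ℂ) ^ 4 • ((1 + S 0) * ((1 + S 1) * ((1 + S 2) * (1 + S 3))))) := by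
    simp only [stabilizerProj, List.ofFn_succ, List.ofFn_zero, List.prod_cons, List.prod_nil,
      mul_one, map_smul, map_add, Matrix.toLin'_mul, Matrix.toLin'_one, smul_mul_smul_comm,
      ← Module.End.mul_eq_comp, ← Module.End.one_eq_id, Fin.reduceSucc]
    norm_num
  rw [h, Matrix.trace_toLin'_eq, trace_smul, trace_prod_one_add_S]
  norm_num

/-- the five-qubit code subspace `C₅ = ⨅ i, ker (Sᵢ - id)` has dimension 2. -/
theorem five_qubit_code_dim_two :
    Module.finrank ℂ
      ↥(⨅ i : Fin 4, LinearMap.ker (Matrix.toLin' (S i) - LinearMap.id)) = 2 := by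
  have hs (i : Fin 4) : toLin' (S i) * toLin' (S i) = 1 := by
    simp only [Module.End.mul_eq_comp, ← Matrix.toLin'_mul, S_mul_self, Matrix.toLin'_one,
      Module.End.one_eq_id]
  have hc (i j : Fin 4) : Commute (toLin' (S i)) (toLin' (S j)) :=
    (commute_S i j).map toLinAlgEquiv'
  have h := (isProj_stabilizerProj hs hc).trace
  rw [trace_stabilizerProj_S] at h
  exact_mod_cast h.symm

end FiveQubitCode
end

section
/- Let P be a complex n×n orthogonal projection matrix (P Hermitian with P·P = P) and ρ a density matrix with t := (trace (P·ρ)).re ≠ 0, and set ρ_s := t⁻¹ • (P·ρ·P). Then for every density matrix σ with P·σ·P = σ, the fidelity factorizes as F(σ, ρ) = t · F(σ, ρ_s). -/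
noncomputable section

open Matrix
open scoped Classical ComplexOrder

namespace SubspaceFidelity

/-- The positive semidefinite square root of a positive semidefinite matrix
(junk value `0` on matrices that are not positive semidefinite). -/
def psqrt {n : ℕ} (M : Matrix (Fin n) (Fin n) ℂ) : Matrix (Fin n) (Fin n) ℂ :=
  if h : M.PosSemidef then
    h.1.eigenvectorUnitary.1 * diagonal ((↑) ∘ (√·) ∘ h.1.eigenvalues) *
      (star h.1.eigenvectorUnitary : Matrix (Fin n) (Fin n) ℂ)
  else 0

/-- The fidelity `F(σ, ρ) = (tr √(√σ · ρ · √σ))²` of two positive semidefinite matrices. -/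
def fid {n : ℕ} (σ ρ : Matrix (Fin n) (Fin n) ℂ) : ℝ :=
  ((psqrt (psqrt σ * ρ * psqrt σ)).trace).re ^ 2

/-! If `σ` is supported on `P` then `√σ · P = √σ = P · √σ`, so
`√σ ρ √σ = √σ (P ρ P) √σ = t • √σ ρ_s √σ`. The square root is positively homogeneous,
`√(t • M) = √t • √M`, so squaring the trace produces exactly the factor `t`. -/

open scoped MatrixOrder

lemma psqrt_of_posSemidef {n : ℕ} {M : Matrix (Fin n) (Fin n) ℂ} (hM : M.PosSemidef) :
    psqrt M = CFC.sqrt M := by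
  rw [psqrt, dif_pos hM, CFC.sqrt_eq_real_sqrt M hM.nonneg, cfcₙ_eq_cfc, hM.1.cfc_eq,
    IsHermitian.cfc, Unitary.conjStarAlgAut_apply]
  rfl

lemma psqrt_of_not_posSemidef {n : ℕ} {M : Matrix (Fin n) (Fin n) ℂ} (hM : ¬M.PosSemidef) :
    psqrt M = 0 :=
  dif_neg hM

lemma posSemidef_psqrt {n : ℕ} {M : Matrix (Fin n) (Fin n) ℂ} (hM : M.PosSemidef) :
    (psqrt M).PosSemidef := by
  rw [psqrt_of_posSemidef hM]
  exact (CFC.sqrt_nonneg M).posSemidef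

lemma psqrt_mul_self {n : ℕ} {M : Matrix (Fin n) (Fin n) ℂ} (hM : M.PosSemidef) :
    psqrt M * psqrt M = M := by
  rw [psqrt_of_posSemidef hM]
  exact CFC.sqrt_mul_sqrt_self M hM.nonneg

lemma psqrt_smul {n : ℕ} (M : Matrix (Fin n) (Fin n) ℂ) {c : ℝ} (hc : 0 ≤ c) :
    psqrt (c • M) = √c • psqrt M := by
  rcases hc.eq_or_lt with rfl | hc
  · simp [psqrt_of_posSemidef PosSemidef.zero]
  by_cases hM : M.PosSemidef
  · rw [psqrt_of_posSemidef (hM.smul hc.le)]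
    refine CFC.sqrt_unique ?_ ((posSemidef_psqrt hM).smul (Real.sqrt_nonneg c)).nonneg
    rw [smul_mul_smul_comm, psqrt_mul_self hM, Real.mul_self_sqrt hc.le]
  · have hcM : ¬(c • M).PosSemidef := fun hcM => hM <| by
      simpa [smul_smul, inv_mul_cancel₀ hc.ne'] using hcM.smul (inv_nonneg.2 hc.le)
    rw [psqrt_of_not_posSemidef hM, psqrt_of_not_posSemidef hcM, smul_zero]

theorem fid_smul_right {n : ℕ} (σ M : Matrix (Fin n) (Fin n) ℂ) {c : ℝ} (hc : 0 ≤ c) :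
    fid σ (c • M) = c * fid σ M := by
  rw [fid, fid, mul_smul_comm, smul_mul_assoc, psqrt_smul _ hc, trace_smul, Complex.real_smul,
    Complex.re_ofReal_mul, mul_pow, Real.sq_sqrt hc]

lemma psqrt_mul_eq_self {n : ℕ} {σ P : Matrix (Fin n) (Fin n) ℂ} (hσ : σ.PosSemidef)
    (h : σ * P = σ) : psqrt σ * P = psqrt σ := by
  have hσQ : (psqrt σ)ᴴ * psqrt σ * (1 - P) = 0 := by
    rw [(posSemidef_psqrt hσ).1.eq, psqrt_mul_self hσ, mul_sub, mul_one, h, sub_self]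
  rw [conjTranspose_mul_self_mul_eq_zero, mul_sub, mul_one, sub_eq_zero] at hσQ
  exact hσQ.symm

lemma mul_psqrt_eq_self {n : ℕ} {σ P : Matrix (Fin n) (Fin n) ℂ} (hσ : σ.PosSemidef)
    (h : P * σ = σ) : P * psqrt σ = psqrt σ := by
  have h' : σ * Pᴴ = σ := by simpa [hσ.1.eq] using congrArg conjTranspose h
  simpa [(posSemidef_psqrt hσ).1.eq] using congrArg conjTranspose (psqrt_mul_eq_self hσ h')

theorem fid_mul_mul_eq_of_mul_mul_eq {n : ℕ} {σ P : Matrix (Fin n) (Fin n) ℂ}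
    (ρ : Matrix (Fin n) (Fin n) ℂ) (hσ : σ.PosSemidef) (hP : P * P = P) (hσP : P * σ * P = σ) :
    fid σ (P * ρ * P) = fid σ ρ := by
  have hright : psqrt σ * P = psqrt σ :=
    psqrt_mul_eq_self hσ (by rw [← hσP, mul_assoc, hP])
  have hleft : P * psqrt σ = psqrt σ :=
    mul_psqrt_eq_self hσ (by rw [← hσP, ← mul_assoc, ← mul_assoc, hP])
  rw [fid, fid, ← mul_assoc, ← mul_assoc, hright, mul_assoc, hleft]

lemma re_trace_mul_nonneg {n : ℕ} {P ρ : Matrix (Fin n) (Fin n) ℂ} (hP : P.IsHermitian)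
    (hproj : P * P = P) (hρ : ρ.PosSemidef) : 0 ≤ (P * ρ).trace.re := by
  have hPρP : (P * ρ * P).PosSemidef := by
    simpa [hP.eq] using hρ.mul_mul_conjTranspose_same P
  have htrace : (P * ρ * P).trace = (P * ρ).trace := by rw [trace_mul_cycle, hproj]
  rw [← htrace]
  exact (Complex.nonneg_iff.1 hPρP.trace_nonneg).1

theorem fidelity_factorization_general (n : ℕ) (P ρ : Matrix (Fin n) (Fin n) ℂ)
    (hP : P.IsHermitian) (hproj : P * P = P)
    (hρ : ρ.PosSemidef)
    (ht : ((P * ρ).trace).re ≠ 0) :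
    ∀ σ : Matrix (Fin n) (Fin n) ℂ, σ.PosSemidef → σ.trace = 1 → P * σ * P = σ →
      fid σ ρ = ((P * ρ).trace).re * fid σ ((((P * ρ).trace).re)⁻¹ • (P * ρ * P)) := by
  intro σ hσ _ hσP
  calc fid σ ρ = fid σ (P * ρ * P) := (fid_mul_mul_eq_of_mul_mul_eq ρ hσ hproj hσP).symm
    _ = fid σ ((P * ρ).trace.re • ((P * ρ).trace.re)⁻¹ • (P * ρ * P)) := by
      rw [smul_inv_smul₀ ht]
    _ = _ := fid_smul_right _ _ (re_trace_mul_nonneg hP hproj hρ)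

/-- with `t = tr(P·ρ) ≠ 0` and `ρ_s = t⁻¹ • (P·ρ·P)`, the fidelity factorizes
as `F(σ, ρ) = t · F(σ, ρ_s)` for every density matrix `σ` supported on the projection `P`. -/
theorem fidelity_factorization (n : ℕ) (P ρ : Matrix (Fin n) (Fin n) ℂ)
    (hP : P.IsHermitian) (hproj : P * P = P)
    (hρ : ρ.PosSemidef) (hρtr : ρ.trace = 1)
    (ht : ((P * ρ).trace).re ≠ 0) :
    ∀ σ : Matrix (Fin n) (Fin n) ℂ, σ.PosSemidef → σ.trace = 1 → P * σ * P = σ →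
      fid σ ρ = ((P * ρ).trace).re * fid σ ((((P * ρ).trace).re)⁻¹ • (P * ρ * P)) :=
  fidelity_factorization_general n P ρ hP hproj hρ ht

end SubspaceFidelity
end
end
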